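/- arXiv:1210.7043 — 2 statements merged into one kernel-verified Lean document; each statement's English description precedes it below -/
import Mathlib

section
/- Let d ≥ 1 be an integer and let S be a set of n ≥ d+1 points in general position in ℝ^d such that the convex hull of S is a d-simplex (i.e., S has exactly d+1 convex hull points, which are affinely independent). Then for every convex hull point p of S there exists a triangulation of S such that at least (d−1)·n − d² + 2 of its d-simplices have p as a vertex. -/
open scoped RealInnerProductSpace

noncomputable section

abbrev Pt (d : ℕ) := EuclideanSpace ℝ (Fin d)

/-- `S` is in general position: every subset of at most `d+1` points is affinely independent. -/
def GenPos {d : ℕ} (S : Finset (Pt d)) : Prop :=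
  ∀ T ⊆ S, T.card ≤ d + 1 →
    AffineIndependent ℝ (Subtype.val : ↥(T : Set (Pt d)) → Pt d)

/-- `S` is in convex position: no point lies in the convex hull of the others. -/
def ConvexPos {d : ℕ} (S : Finset (Pt d)) : Prop :=
  ∀ p ∈ S, p ∉ convexHull ℝ ((S : Set (Pt d)) \ {p})

/-- `K` is a triangulation of `S`: a geometric simplicial complex whose vertex set is `S`
and whose underlying space is the convex hull of `S`. -/
def IsTriangulation {d : ℕ} (S : Finset (Pt d))
    (K : Geometry.SimplicialComplex ℝ (Pt d)) : Prop :=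
  K.vertices = (S : Set (Pt d)) ∧ K.space = convexHull ℝ (S : Set (Pt d))

/-- The number of faces of `K` having exactly `m` vertices (i.e. `(m-1)`-simplices). -/
def faceCount {d : ℕ} (K : Geometry.SimplicialComplex ℝ (Pt d)) (m : ℕ) : ℕ :=
  {σ : Finset (Pt d) | σ ∈ K.faces ∧ σ.card = m}.ncard

/-- The number of `m`-vertex faces of `K` having `p` as a vertex. -/
def incCount {d : ℕ} (K : Geometry.SimplicialComplex ℝ (Pt d)) (m : ℕ) (p : Pt d) : ℕ :=
  {σ : Finset (Pt d) | σ ∈ K.faces ∧ σ.card = m ∧ p ∈ σ}.ncard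

/-- The convex hull points of `S`: points of `S` on the boundary of the convex hull of `S`. -/
def hullPts {d : ℕ} (S : Finset (Pt d)) : Set (Pt d) :=
  {p : Pt d | p ∈ S ∧ p ∈ frontier (convexHull ℝ (S : Set (Pt d)))}

/-- The number of `m`-vertex faces of `K` having at least one convex hull point of `S`
as a vertex. -/
def bndCount {d : ℕ} (S : Finset (Pt d)) (K : Geometry.SimplicialComplex ℝ (Pt d))
    (m : ℕ) : ℕ :=
  {σ : Finset (Pt d) | σ ∈ K.faces ∧ σ.card = m ∧ ∃ q ∈ σ, q ∈ hullPts S}.ncard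

/-- The degree of `p` in the 1-skeleton of the convex hull of `S` in `ℝ³`: the number of
points `q` of `S` such that the segment `pq` is an edge (a 1-dimensional face, i.e. an
extreme segment) of the convex hull of `S`. -/
def hullDegree (S : Finset (Pt 3)) (p : Pt 3) : ℕ :=
  {q : Pt 3 | q ∈ S ∧ q ≠ p ∧
    IsExtreme ℝ (convexHull ℝ (S : Set (Pt 3))) (segment ℝ p q)}.ncard

/-- The size of the largest color class of the `k`-colored set `S`. -/
def maxClassCard {d k : ℕ} (S : Finset (Pt d)) (χ : Pt d → Fin k) : ℕ :=
  Finset.univ.sup fun i : Fin k => (S.filter fun p => χ p = i).card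

/-- The discrepancy `δ(S) = k·|S_max| − |S|` of the `k`-colored set `S`. -/
def disc {d k : ℕ} (S : Finset (Pt d)) (χ : Pt d → Fin k) : ℤ :=
  (k : ℤ) * maxClassCard S χ - S.card

/-- `χ` is a `k`-coloring of `S`: every color class is nonempty. -/
def IsColoring {d k : ℕ} (S : Finset (Pt d)) (χ : Pt d → Fin k) : Prop :=
  ∀ i : Fin k, ∃ p ∈ S, χ p = i

/-- The number of empty monochromatic `d`-simplices of the `k`-colored set `S`:
sets of `d+1` affinely independent points of `S` of a single color whose convex hull
has no point of `S` in its interior. -/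
def numEmptyMono {d k : ℕ} (S : Finset (Pt d)) (χ : Pt d → Fin k) : ℕ :=
  {σ : Finset (Pt d) | ↑σ ⊆ (S : Set (Pt d)) ∧ σ.card = d + 1 ∧
    AffineIndependent ℝ (Subtype.val : ↥(σ : Set (Pt d)) → Pt d) ∧
    (∃ i : Fin k, ∀ p ∈ σ, χ p = i) ∧
    ∀ q ∈ S, q ∉ interior (convexHull ℝ (σ : Set (Pt d)))}.ncard

end

set_option maxHeartbeats 2000000

open Finset Geometry

noncomputable section

variable {d : ℕ}

lemma mem_hull_iff (A : Finset (Pt d)) (z : Pt d) :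
    z ∈ convexHull ℝ (A : Set (Pt d)) ↔
      ∃ w : Pt d → ℝ, (∀ y ∈ A, 0 ≤ w y) ∧ ∑ y ∈ A, w y = 1 ∧ ∑ y ∈ A, w y • y = z := by
  rw [Finset.convexHull_eq]
  constructor
  · rintro ⟨w, h0, h1, hc⟩
    refine ⟨w, h0, h1, ?_⟩
    rw [Finset.centerMass_eq_of_sum_1 _ _ h1] at hc; simpa using hc
  · rintro ⟨w, h0, h1, hc⟩
    refine ⟨w, h0, h1, ?_⟩
    rw [Finset.centerMass_eq_of_sum_1 _ _ h1]; simpa using hc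

lemma affine_combo (f : Pt d →ᵃ[ℝ] ℝ) (A : Finset (Pt d)) (w : Pt d → ℝ)
    (h1 : ∑ y ∈ A, w y = 1) :
    f (∑ y ∈ A, w y • y) = ∑ y ∈ A, w y * f y := by
  have hf : ∀ x : Pt d, f x = f.linear x + f 0 := by
    intro x
    conv_lhs => rw [show x = x +ᵥ (0 : Pt d) by simp]
    rw [f.map_vadd]
    rfl
  rw [hf, map_sum]
  have hl : ∀ y : Pt d, f.linear y = f y - f 0 := fun y => by rw [hf y]; ring
  simp_rw [map_smul, smul_eq_mul, hl, mul_sub]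
  rw [Finset.sum_sub_distrib, ← Finset.sum_mul, h1]
  ring

lemma not_indep_subset_span (A B : Finset (Pt d)) (hB : B.Nonempty)
    (hA : AffineIndependent ℝ (Subtype.val : ↥(A : Set (Pt d)) → Pt d))
    (hcard : B.card < A.card)
    (hsub : (A : Set (Pt d)) ⊆ (affineSpan ℝ (B : Set (Pt d)) : Set (Pt d))) : False := by
  have h1 : vectorSpan ℝ (A : Set (Pt d)) ≤ vectorSpan ℝ (B : Set (Pt d)) := by
    rw [← direction_affineSpan ℝ (B : Set (Pt d))]
    exact vectorSpan_mono ℝ hsub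
  have hA' : Module.finrank ℝ (vectorSpan ℝ (A : Set (Pt d))) = A.card - 1 := by
    have := hA.finrank_vectorSpan (n := A.card - 1) ?_
    · rwa [Subtype.range_coe] at this
    · have hApos : 0 < A.card := lt_of_le_of_lt (Nat.zero_le _) hcard
      simp
      omega
  have hB' : Module.finrank ℝ (vectorSpan ℝ (B : Set (Pt d))) ≤ B.card - 1 := by
    have := finrank_vectorSpan_range_le ℝ (Subtype.val : ↥(B : Set (Pt d)) → Pt d)
      (n := B.card - 1) ?_
    · rwa [Subtype.range_coe] at this
    · simp
      have := hB.card_pos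
      omega
  have h2 := Submodule.finrank_mono h1
  rw [hA'] at h2
  have h3 := h2.trans hB'
  have := hB.card_pos
  have : 0 < A.card := lt_trans hB.card_pos hcard
  omega

def simplexComplex (S : Finset (Pt d))
    (hind : AffineIndependent ℝ (Subtype.val : ↥(S : Set (Pt d)) → Pt d)) :
    Geometry.SimplicialComplex ℝ (Pt d) where
  faces := {t | t ⊆ S ∧ t.Nonempty}
  indep := by
    intro s hs
    exact hind.mono (by exact_mod_cast hs.1)
  isRelLowerSet_faces := by
    intro s hs
    exact ⟨hs.2, fun t hts ht => ⟨hts.trans hs.1, ht⟩⟩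
  inter_subset_convexHull := by
    intro s t hs ht
    exact (hind.convexHull_inter hs.1 ht.1).ge

lemma simplexComplex_faces (S : Finset (Pt d)) (hind) (t : Finset (Pt d)) :
    t ∈ (simplexComplex S hind).faces ↔ t ⊆ S ∧ t.Nonempty := Iff.rfl

lemma simplexComplex_vertices (S : Finset (Pt d)) (hind) :
    (simplexComplex S hind).vertices = (S : Set (Pt d)) := by
  ext x
  rw [Geometry.SimplicialComplex.mem_vertices, simplexComplex_faces]
  simp

lemma simplexComplex_space (S : Finset (Pt d)) (hS : S.Nonempty) (hind) :
    (simplexComplex S hind).space = convexHull ℝ (S : Set (Pt d)) := by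
  apply subset_antisymm
  · refine Set.iUnion₂_subset fun t ht => ?_
    exact convexHull_mono (by exact_mod_cast ht.1)
  · exact (simplexComplex S hind).convexHull_subset_space ⟨subset_rfl, hS⟩

lemma coord_pos {S T : Finset (Pt d)} (hTS : T ⊆ S) (hTcard : T.card = d + 1)
    (hd : 1 ≤ d)
    (hgp : GenPos S)
    (b : AffineBasis ↥(T : Set (Pt d)) ℝ (Pt d)) (hb : ∀ i, b i = ↑i)
    {r : Pt d} (hrS : r ∈ S) (hrT : r ∉ T) (hr : r ∈ convexHull ℝ (T : Set (Pt d)))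
    (i : ↥(T : Set (Pt d))) : 0 < b.coord i r := by
  classical
  obtain ⟨w, hw0, hw1, hw2⟩ := (mem_hull_iff T r).1 hr
  have hcoord_y : ∀ y ∈ T, b.coord i y = if (i : Pt d) = y then 1 else 0 := by
    intro y hy
    have h1 : b ⟨y, by exact_mod_cast hy⟩ = y := hb _
    rw [← h1, AffineBasis.coord_apply]
    simp only [Subtype.ext_iff, h1]
  have hcoord : b.coord i r = w i := by
    rw [← hw2, affine_combo _ _ _ hw1]
    rw [Finset.sum_eq_single (i : Pt d)]
    · rw [hcoord_y _ i.2, if_pos rfl, mul_one]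
    · intro y hy hne
      rw [hcoord_y y hy, if_neg (Ne.symm hne), mul_zero]
    · intro h
      exact absurd i.2 (by simpa using h)
  have hiT : (i : Pt d) ∈ T := by exact_mod_cast i.2
  rcases (hw0 _ hiT).lt_or_eq with h | h
  · rwa [hcoord]
  · exfalso
    -- r lies in the affine span of T.erase i, contradicting general position
    have hsum' : ∑ y ∈ T.erase (i : Pt d), w y = 1 := by
      rw [Finset.sum_erase _ (by rw [← h])]
      exact hw1
    have hcombo' : ∑ y ∈ T.erase (i : Pt d), w y • y = r := by
      rw [Finset.sum_erase _ (by rw [← h, zero_smul])]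
      exact hw2
    have hrmem : r ∈ convexHull ℝ ((T.erase (i : Pt d)) : Set (Pt d)) :=
      (mem_hull_iff _ r).2 ⟨w, fun y hy => hw0 y (Finset.erase_subset _ _ hy), hsum', hcombo'⟩
    have hrT' : r ∉ T.erase (i : Pt d) := fun hc => hrT (Finset.erase_subset _ _ hc)
    refine not_indep_subset_span (insert r (T.erase (i : Pt d))) (T.erase (i : Pt d))
      ?_ ?_ ?_ ?_
    · refine Finset.card_pos.1 ?_
      rw [Finset.card_erase_of_mem hiT]
      omega
    · refine hgp _ ?_ ?_
      · intro x hx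
        rcases Finset.mem_insert.1 hx with rfl | hx
        · exact hrS
        · exact hTS (Finset.erase_subset _ _ hx)
      · rw [Finset.card_insert_of_notMem hrT', Finset.card_erase_of_mem hiT]
        omega
    · rw [Finset.card_insert_of_notMem hrT']
      omega
    · rw [Finset.coe_insert]
      rw [Set.insert_subset_iff]
      exact ⟨convexHull_subset_affineSpan _ hrmem, subset_affineSpan ℝ _⟩


theorem key (d : ℕ) (hd : 1 ≤ d) :
    ∀ n : ℕ, ∀ S T : Finset (Pt d), S.card ≤ n → T ⊆ S → T.card = d + 1 →
    convexHull ℝ (S : Set (Pt d)) = convexHull ℝ (T : Set (Pt d)) → GenPos S →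
    ∀ p ∈ T, ∃ K : Geometry.SimplicialComplex ℝ (Pt d),
      K.vertices = (S : Set (Pt d)) ∧ K.space = convexHull ℝ (S : Set (Pt d)) ∧
      (∀ U : Finset (Pt d), U ⊂ T → U.Nonempty → U ∈ K.faces) ∧
      ((d : ℤ) - 1) * S.card - (d : ℤ)^2 + 2 ≤ (incCount K (d+1) p : ℤ) := by
  intro n
  induction n with
  | zero =>
    intro S T hSn hTS hTcard _ _ p hp
    exfalso
    have := Finset.card_le_card hTS
    omega
  | succ n IH =>
    intro S T hSn hTS hTcard hhull hgp p hpT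
    classical
    by_cases hST : S = T
    · -- base case : S is a simplex
      subst hST
      have hind : AffineIndependent ℝ (Subtype.val : ↥(S : Set (Pt d)) → Pt d) :=
        hgp S subset_rfl (le_of_eq hTcard)
      have hSne : S.Nonempty := Finset.card_pos.1 (by omega)
      refine ⟨simplexComplex S hind, simplexComplex_vertices S hind,
        simplexComplex_space S hSne hind, ?_, ?_⟩
      · intro U hU hUne
        exact ⟨hU.subset, hUne⟩
      · have hset : {σ : Finset (Pt d) | σ ∈ (simplexComplex S hind).faces ∧
            σ.card = d + 1 ∧ p ∈ σ} = {S} := by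
          ext σ
          simp only [Set.mem_setOf_eq, Set.mem_singleton_iff, simplexComplex_faces]
          constructor
          · rintro ⟨⟨hσS, -⟩, hσc, -⟩
            exact Finset.eq_of_subset_of_card_le hσS (by omega)
          · rintro rfl
            exact ⟨⟨subset_rfl, hSne⟩, hTcard, hpT⟩
        rw [incCount, hset, Set.ncard_singleton, hTcard]
        push_cast
        nlinarith [sq_nonneg ((d : ℤ))]
    · -- inductive step
      have hcardT' := hTcard
      have hTne : T.Nonempty := Finset.card_pos.1 (by omega)
      have hSTne : (S \ T).Nonempty := by
        rw [Finset.sdiff_nonempty]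
        intro h
        exact hST (Finset.Subset.antisymm h hTS)
      have hindT : AffineIndependent ℝ (Subtype.val : ↥(T : Set (Pt d)) → Pt d) :=
        hgp T hTS (le_of_eq hTcard)
      have htot : affineSpan ℝ (Set.range (Subtype.val : ↥(T : Set (Pt d)) → Pt d)) = ⊤ := by
        rw [hindT.affineSpan_eq_top_iff_card_eq_finrank_add_one]
        simp [hTcard]
      set b : AffineBasis ↥(T : Set (Pt d)) ℝ (Pt d) := ⟨Subtype.val, hindT, htot⟩ with hb_def
      have hb : ∀ i, b i = ↑i := fun i => rfl
      set cf : Pt d → Pt d →ᵃ[ℝ] ℝ :=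
        fun u => if h : u ∈ T then b.coord ⟨u, h⟩ else 0 with hcf_def
      have hcf_app : ∀ (u : Pt d) (h : u ∈ T), cf u = b.coord ⟨u, h⟩ := by
        intro u h
        simp only [hcf_def]
        rw [dif_pos h]
      have hcf_val : ∀ u ∈ T, ∀ y ∈ T, cf u y = if u = y then 1 else 0 := by
        intro u hu y hy
        rw [hcf_app u hu]
        have h1 : b ⟨y, by exact_mod_cast hy⟩ = y := hb _
        rw [← h1, AffineBasis.coord_apply]
        simp only [Subtype.ext_iff, h1]
      have hcf_combo : ∀ (A : Finset (Pt d)) (w : Pt d → ℝ), (∑ y ∈ A, w y = 1) →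
          ∀ u : Pt d, cf u (∑ y ∈ A, w y • y) = ∑ y ∈ A, w y * cf u y :=
        fun A w h1 u => affine_combo (cf u) A w h1
      have hrepr : ∀ z ∈ convexHull ℝ (T : Set (Pt d)),
          (∀ u ∈ T, 0 ≤ cf u z) ∧ (∑ u ∈ T, cf u z = 1) ∧ (∑ u ∈ T, cf u z • u = z) := by
        intro z hz
        obtain ⟨w, hw0, hw1, hw2⟩ := (mem_hull_iff T z).1 hz
        have hwc : ∀ u ∈ T, cf u z = w u := by
          intro u hu
          rw [← hw2, hcf_combo T w hw1 u, Finset.sum_eq_single u]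
          · rw [hcf_val u hu u hu, if_pos rfl, mul_one]
          · intro y hy hne
            rw [hcf_val u hu y hy, if_neg (fun h => hne h.symm), mul_zero]
          · intro h
            exact absurd hu h
        refine ⟨fun u hu => (hwc u hu) ▸ hw0 u hu, ?_, ?_⟩
        · rw [Finset.sum_congr rfl hwc]
          exact hw1
        · rw [Finset.sum_congr rfl (fun u hu => by rw [hwc u hu])]
          exact hw2
      obtain ⟨q, hqmem, hqmin⟩ := Finset.exists_min_image (S \ T) (fun r => cf p r) hSTne
      have hqS : q ∈ S := (Finset.mem_sdiff.1 hqmem).1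
      have hqT : q ∉ T := (Finset.mem_sdiff.1 hqmem).2
      have hq_hull : q ∈ convexHull ℝ (T : Set (Pt d)) := by
        rw [← hhull]
        exact subset_convexHull ℝ _ (Finset.mem_coe.2 hqS)
      have hpos : ∀ r ∈ S, r ∉ T → ∀ u ∈ T, 0 < cf u r := by
        intro r hrS hrT u hu
        have hr : r ∈ convexHull ℝ (T : Set (Pt d)) := by
          rw [← hhull]
          exact subset_convexHull ℝ _ (Finset.mem_coe.2 hrS)
        rw [hcf_app u hu]
        exact coord_pos hTS hTcard hd hgp b hb hrS hrT hr ⟨u, by exact_mod_cast hu⟩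
      have hq0 : ∀ u ∈ T, 0 ≤ cf u q := (hrepr q hq_hull).1
      have hcq1 : ∑ u ∈ T, cf u q = 1 := (hrepr q hq_hull).2.1
      have hcombq : ∑ u ∈ T, cf u q • u = q := (hrepr q hq_hull).2.2
      have hqTR : ∀ R : Finset (Pt d), q ∉ T \ R := fun R h => hqT (Finset.mem_sdiff.1 h).1
      have hsubhull : ∀ a : Pt d,
          convexHull ℝ (↑(insert q (T \ {a})) : Set (Pt d)) ⊆ convexHull ℝ (T : Set (Pt d)) := by
        intro a
        apply convexHull_min _ (convex_convexHull ℝ _)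
        rw [Finset.coe_insert]
        rw [Set.insert_subset_iff]
        refine ⟨hq_hull, ?_⟩
        refine Set.Subset.trans ?_ (subset_convexHull ℝ (T : Set (Pt d)))
        exact_mod_cast Finset.sdiff_subset
      -- the master subdivision lemma
      have master : ∀ R : Finset (Pt d), R ⊆ T → ∀ z ∈ convexHull ℝ (T : Set (Pt d)),
          ∀ lam : ℝ, 0 ≤ lam → (∀ u ∈ T, lam * cf u q ≤ cf u z) →
          (∀ u ∈ R, cf u z = lam * cf u q) →
          z ∈ convexHull ℝ (↑(insert q (T \ R)) : Set (Pt d)) := by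
        intro R hRT z hz lam hlam0 hle heq
        obtain ⟨hz0, hz1, hz2⟩ := hrepr z hz
        refine (mem_hull_iff _ _).2
          ⟨fun y => if y = q then lam else cf y z - lam * cf y q, ?_, ?_, ?_⟩
        · intro y hy
          dsimp only
          rcases Finset.mem_insert.1 hy with rfl | hy
          · rw [if_pos rfl]; exact hlam0
          · have hyT : y ∈ T := (Finset.mem_sdiff.1 hy).1
            have hyq : y ≠ q := by rintro rfl; exact hqT hyT
            rw [if_neg hyq]
            have := hle y hyT
            linarith
        · rw [Finset.sum_insert (hqTR R)]
          rw [if_pos rfl]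
          rw [Finset.sum_congr rfl (fun y hy => if_neg (fun h : y = q => hqTR R (h ▸ hy)))]
          have hsplit := Finset.sum_sdiff (f := fun y => cf y z - lam * cf y q) hRT
          have hR0 : ∑ y ∈ R, (cf y z - lam * cf y q) = 0 :=
            Finset.sum_eq_zero (fun y hy => by rw [heq y hy]; ring)
          have hT' : ∑ y ∈ T, (cf y z - lam * cf y q) = 1 - lam := by
            rw [Finset.sum_sub_distrib, hz1, ← Finset.mul_sum, hcq1, mul_one]
          rw [hR0, add_zero] at hsplit
          rw [hsplit, hT']
          ring
        · rw [Finset.sum_insert (hqTR R)]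
          dsimp only
          rw [if_pos rfl]
          rw [Finset.sum_congr rfl
            (fun y hy => by rw [if_neg (fun h : y = q => hqTR R (h ▸ hy))])]
          have hsplit := Finset.sum_sdiff (f := fun y => (cf y z - lam * cf y q) • y) hRT
          have hR0 : ∑ y ∈ R, (cf y z - lam * cf y q) • y = 0 :=
            Finset.sum_eq_zero (fun y hy => by rw [heq y hy, sub_self, zero_smul])
          rw [hR0, add_zero] at hsplit
          rw [hsplit]
          have hT' : ∑ y ∈ T, (cf y z - lam * cf y q) • y
              = z - lam • q := by
            have e1 : ∀ y ∈ T, (cf y z - lam * cf y q) • y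
                = cf y z • y - lam • (cf y q • y) := by
              intro y hy
              rw [sub_smul, smul_smul]
            rw [Finset.sum_congr rfl e1, Finset.sum_sub_distrib, ← Finset.smul_sum, hz2, hcombq]
          rw [hT']
          abel
      -- coordinates of a point of a subsimplex
      have hcoords : ∀ a ∈ T, ∀ z, z ∈ convexHull ℝ (↑(insert q (T \ {a})) : Set (Pt d)) →
          ∃ lam : ℝ, 0 ≤ lam ∧ lam ≤ 1 ∧ cf a z = lam * cf a q ∧
            (∀ u ∈ T, lam * cf u q ≤ cf u z) ∧ z ∈ convexHull ℝ (T : Set (Pt d)) := by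
        intro a ha z hz
        have hzT : z ∈ convexHull ℝ (T : Set (Pt d)) := hsubhull a hz
        obtain ⟨w, hw0, hw1, hw2⟩ := (mem_hull_iff _ _).1 hz
        have hcfz : ∀ u : Pt d, cf u z = w q * cf u q + ∑ y ∈ T \ {a}, w y * cf u y := by
          intro u
          rw [← hw2, hcf_combo _ w hw1 u, Finset.sum_insert (hqTR {a})]
        refine ⟨w q, hw0 q (Finset.mem_insert_self _ _), ?_, ?_, ?_, hzT⟩
        · rw [← hw1]
          exact Finset.single_le_sum (fun y hy => hw0 y hy) (Finset.mem_insert_self _ _)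
        · rw [hcfz a, Finset.sum_eq_zero, add_zero, mul_comm]
          intro y hy
          have hyT : y ∈ T := (Finset.mem_sdiff.1 hy).1
          have hya : ¬(a = y) := by
            intro h
            exact (Finset.mem_sdiff.1 hy).2 (by rw [← h]; exact Finset.mem_singleton_self a)
          rw [hcf_val a ha y hyT, if_neg hya, mul_zero]
        · intro u hu
          rw [hcfz u, mul_comm]
          have : 0 ≤ ∑ y ∈ T \ {a}, w y * cf u y := by
            apply Finset.sum_nonneg
            intro y hy
            have hyT : y ∈ T := (Finset.mem_sdiff.1 hy).1
            apply mul_nonneg (hw0 y (Finset.mem_insert_of_mem hy))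
            rw [hcf_val u hu y hyT]
            split <;> norm_num
          linarith
      -- covering
      have hcover : ∀ z ∈ convexHull ℝ (T : Set (Pt d)),
          ∃ a ∈ T, z ∈ convexHull ℝ (↑(insert q (T \ {a})) : Set (Pt d)) := by
        intro z hz
        obtain ⟨a, haT, hamin⟩ := Finset.exists_min_image T (fun u => cf u z / cf u q) hTne
        have hca : 0 < cf a q := hpos q hqS hqT a haT
        refine ⟨a, haT, master {a} (Finset.singleton_subset_iff.2 haT) z hz
          (cf a z / cf a q) (div_nonneg ((hrepr z hz).1 a haT) hca.le) ?_ ?_⟩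
        · intro u hu
          have hcu : 0 < cf u q := hpos q hqS hqT u hu
          have h1 := hamin u hu
          rw [div_le_div_iff₀ hca hcu] at h1
          rw [div_mul_eq_mul_div, div_le_iff₀ hca]
          linarith
        · intro u hu
          rw [Finset.mem_singleton] at hu
          subst hu
          field_simp
      -- intersections of two subsimplices
      have hinter : ∀ a ∈ T, ∀ a' ∈ T, a ≠ a' → ∀ z,
          z ∈ convexHull ℝ (↑(insert q (T \ {a})) : Set (Pt d)) →
          z ∈ convexHull ℝ (↑(insert q (T \ {a'})) : Set (Pt d)) →
          z ∈ convexHull ℝ (↑(insert q (T \ ({a, a'} : Finset (Pt d)))) : Set (Pt d)) := by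
        intro a ha a' ha' hne z hz hz'
        obtain ⟨lam, h0, h1, heqa, hlea, hzT⟩ := hcoords a ha z hz
        obtain ⟨lam', h0', h1', heqa', hlea', -⟩ := hcoords a' ha' z hz'
        have hca : 0 < cf a q := hpos q hqS hqT a ha
        have hca' : 0 < cf a' q := hpos q hqS hqT a' ha'
        have hll : lam = lam' := by
          have e1 := hlea a' ha'
          have e2 := hlea' a ha
          rw [heqa'] at e1
          rw [heqa] at e2
          have i1 : lam ≤ lam' := by
            have := (mul_le_mul_iff_of_pos_right hca').1 (by linarith [e1] : lam * cf a' q ≤ lam' * cf a' q)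
            exact this
          have i2 : lam' ≤ lam := (mul_le_mul_iff_of_pos_right hca).1 (by linarith [e2])
          linarith
        refine master {a, a'} ?_ z hzT lam h0 hlea ?_
        · intro x hx
          rcases Finset.mem_insert.1 hx with rfl | hx
          · exact ha
          · rw [Finset.mem_singleton] at hx; subst hx; exact ha'
        · intro u hu
          rcases Finset.mem_insert.1 hu with rfl | hu
          · exact heqa
          · rw [Finset.mem_singleton] at hu
            subst hu
            rw [heqa', hll]
      -- a is not in its opposite subsimplex
      have hvnotin : ∀ a ∈ T, a ∉ convexHull ℝ (↑(insert q (T \ {a})) : Set (Pt d)) := by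
        intro a ha hcon
        obtain ⟨lam, h0, h1, heqa, -, -⟩ := hcoords a ha a hcon
        have hself : cf a a = 1 := by rw [hcf_val a ha a ha, if_pos rfl]
        have hca : 0 < cf a q := hpos q hqS hqT a ha
        obtain ⟨a2, ha2T, ha2ne⟩ := Finset.exists_mem_ne (by omega : 1 < T.card) a
        have hc2 : 0 < cf a2 q := hpos q hqS hqT a2 ha2T
        have hpair : ({a, a2} : Finset (Pt d)) ⊆ T := by
          intro x hx
          rcases Finset.mem_insert.1 hx with rfl | hx
          · exact ha
          · rw [Finset.mem_singleton] at hx; subst hx; exact ha2T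
        have hsum_le : cf a q + cf a2 q ≤ 1 := by
          rw [← hcq1]
          rw [← Finset.sum_pair (f := fun u => cf u q) (fun h => ha2ne (h.symm))]
          exact Finset.sum_le_sum_of_subset_of_nonneg hpair (fun i hi _ => hq0 i hi)
        have hkey : lam * cf a q ≤ 1 * cf a q := mul_le_mul_of_nonneg_right h1 hca.le
        rw [one_mul] at hkey
        linarith
      -- the point sets of the subsimplices
      set Sa : Pt d → Finset (Pt d) :=
        fun a => S.filter (fun r => r ∈ convexHull ℝ (↑(insert q (T \ {a})) : Set (Pt d)))
        with hSa_def
      have hSa_mem : ∀ a r, r ∈ Sa a ↔ r ∈ S ∧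
          r ∈ convexHull ℝ (↑(insert q (T \ {a})) : Set (Pt d)) := by
        intro a r
        simp [hSa_def]
      have hsubS : ∀ a ∈ T, insert q (T \ {a}) ⊆ S := by
        intro a ha x hx
        rcases Finset.mem_insert.1 hx with rfl | hx
        · exact hqS
        · exact hTS (Finset.mem_sdiff.1 hx).1
      have hσSa : ∀ a ∈ T, insert q (T \ {a}) ⊆ Sa a := by
        intro a ha x hx
        exact (hSa_mem a x).2 ⟨hsubS a ha hx, subset_convexHull ℝ _ (Finset.mem_coe.2 hx)⟩
      have hSaS : ∀ a, Sa a ⊆ S := fun a => Finset.filter_subset _ _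
      have hSahull : ∀ a ∈ T, convexHull ℝ (↑(Sa a) : Set (Pt d))
          = convexHull ℝ (↑(insert q (T \ {a})) : Set (Pt d)) := by
        intro a ha
        apply subset_antisymm
        · apply convexHull_min _ (convex_convexHull ℝ _)
          intro r hr
          exact ((hSa_mem a r).1 (by exact_mod_cast hr)).2
        · exact convexHull_mono (by exact_mod_cast hσSa a ha)
      have hsubcard : ∀ a ∈ T, (insert q (T \ {a})).card = d + 1 := by
        intro a ha
        rw [Finset.card_insert_of_notMem (hqTR {a}),
          Finset.card_sdiff_of_subset (Finset.singleton_subset_iff.2 ha), Finset.card_singleton, hTcard]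
        omega
      have hSacard : ∀ a ∈ T, (Sa a).card ≤ n := by
        intro a ha
        have h1 : Sa a ⊂ S := by
          refine (Finset.ssubset_iff_of_subset (hSaS a)).2 ⟨a, hTS ha, ?_⟩
          intro hc
          exact hvnotin a ha ((hSa_mem a a).1 hc).2
        have := Finset.card_lt_card h1
        omega
      have hgpa : ∀ a, GenPos (Sa a) := by
        intro a U hU hUc
        exact hgp U (hU.trans (hSaS a)) hUc
      -- apply the induction hypothesis to each subsimplex
      have hKex : ∀ a : Pt d, a ∈ T → ∃ K : Geometry.SimplicialComplex ℝ (Pt d),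
          K.vertices = (↑(Sa a) : Set (Pt d)) ∧
          K.space = convexHull ℝ (↑(Sa a) : Set (Pt d)) ∧
          (∀ U : Finset (Pt d), U ⊂ insert q (T \ {a}) → U.Nonempty → U ∈ K.faces) ∧
          ((d : ℤ) - 1) * (Sa a).card - (d : ℤ)^2 + 2 ≤
            (incCount K (d+1) (if a = p then q else p) : ℤ) := by
        intro a ha
        refine IH (Sa a) (insert q (T \ {a})) (hSacard a ha) (hσSa a ha) (hsubcard a ha)
          (by rw [hSahull a ha]) (hgpa a) _ ?_
        by_cases hap : a = p
        · rw [if_pos hap]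
          exact Finset.mem_insert_self _ _
        · rw [if_neg hap]
          refine Finset.mem_insert_of_mem (Finset.mem_sdiff.2 ⟨hpT, ?_⟩)
          exact fun hc => hap ((Finset.mem_singleton.1 hc).symm)
      choose! K hKv hKs hKf hKc using hKex
      have hface_sub : ∀ a ∈ T, ∀ ρ ∈ (K a).faces,
          convexHull ℝ (↑ρ : Set (Pt d)) ⊆
            convexHull ℝ (↑(insert q (T \ {a})) : Set (Pt d)) := by
        intro a ha ρ hρ
        rw [← hSahull a ha, ← hKs a ha]
        exact (K a).convexHull_subset_space hρ
      have hface_subS : ∀ a ∈ T, ∀ ρ ∈ (K a).faces, ρ ⊆ Sa a := by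
        intro a ha ρ hρ x hx
        have hxv : x ∈ (K a).vertices :=
          Geometry.SimplicialComplex.mem_vertices.2
            ((K a).down_closed hρ (Finset.singleton_subset_iff.2 hx) (Finset.singleton_nonempty x))
        rw [hKv a ha] at hxv
        exact_mod_cast hxv
      have hτface : ∀ a ∈ T, ∀ a' ∈ T, a ≠ a' →
          insert q (T \ ({a, a'} : Finset (Pt d))) ∈ (K a).faces := by
        intro a ha a' ha' hne
        refine hKf a ha _ ?_ ⟨q, Finset.mem_insert_self _ _⟩
        have hsub : insert q (T \ ({a, a'} : Finset (Pt d))) ⊆ insert q (T \ {a}) := by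
          intro x hx
          rcases Finset.mem_insert.1 hx with rfl | hx
          · exact Finset.mem_insert_self _ _
          · have h2 := Finset.mem_sdiff.1 hx
            refine Finset.mem_insert_of_mem (Finset.mem_sdiff.2 ⟨h2.1, fun hc => h2.2 ?_⟩)
            exact Finset.mem_insert.2 (Or.inl (Finset.mem_singleton.1 hc))
        refine (Finset.ssubset_iff_of_subset hsub).2 ⟨a', ?_, ?_⟩
        · refine Finset.mem_insert_of_mem (Finset.mem_sdiff.2 ⟨ha', ?_⟩)
          exact fun hc => hne ((Finset.mem_singleton.1 hc).symm)
        · intro hc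
          rcases Finset.mem_insert.1 hc with rfl | hc
          · exact hqT ha'
          · exact (Finset.mem_sdiff.1 hc).2 (Finset.mem_insert_of_mem (Finset.mem_singleton_self a'))
      have hcross : ∀ a ∈ T, ∀ a' ∈ T, a ≠ a' → ∀ ρa ∈ (K a).faces, ∀ ρb ∈ (K a').faces,
          convexHull ℝ (↑ρa : Set (Pt d)) ∩ convexHull ℝ (↑ρb : Set (Pt d)) ⊆
            convexHull ℝ (↑(ρa ∩ ρb) : Set (Pt d)) := by
        intro a ha a' ha' hne ρa hρa ρb hρb z hz
        obtain ⟨hz1, hz2⟩ := hz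
        have hza : z ∈ convexHull ℝ (↑(insert q (T \ {a})) : Set (Pt d)) :=
          hface_sub a ha ρa hρa hz1
        have hzb : z ∈ convexHull ℝ (↑(insert q (T \ {a'})) : Set (Pt d)) :=
          hface_sub a' ha' ρb hρb hz2
        have hzτ : z ∈ convexHull ℝ (↑(insert q (T \ ({a, a'} : Finset (Pt d)))) : Set (Pt d)) :=
          hinter a ha a' ha' hne z hza hzb
        have hτa := hτface a ha a' ha' hne
        have hτb : insert q (T \ ({a, a'} : Finset (Pt d))) ∈ (K a').faces := by
          have h := hτface a' ha' a ha hne.symm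
          rwa [Finset.pair_comm a' a] at h
        have h1 := (K a).inter_subset_convexHull hρa hτa ⟨hz1, hzτ⟩
        have h2 := (K a').inter_subset_convexHull hρb hτb ⟨hz2, hzτ⟩
        rw [← Finset.coe_inter] at h1 h2
        have hτind := (K a).indep hτa
        have h3 : z ∈ convexHull ℝ
            ((↑(ρa ∩ insert q (T \ ({a, a'} : Finset (Pt d)))) : Set (Pt d)) ∩
               ↑(ρb ∩ insert q (T \ ({a, a'} : Finset (Pt d))))) := by
          rw [hτind.convexHull_inter Finset.inter_subset_right Finset.inter_subset_right]
          exact ⟨h1, h2⟩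
        refine convexHull_mono ?_ h3
        intro x hx
        simp only [Finset.coe_inter, Set.mem_inter_iff] at hx ⊢
        exact ⟨hx.1.1, hx.2.1⟩
      refine ⟨⟨⟨⋃ a ∈ T, (K a).faces, ?_⟩, ?_, ?_⟩, ?_, ?_, ?_, ?_⟩
      · -- isRelLowerSet_faces
        intro s hs
        simp only [Set.mem_iUnion] at hs
        obtain ⟨a, ha, hs⟩ := hs
        exact ⟨(K a).nonempty_of_mem_faces hs,
          fun t hts ht => Set.mem_iUnion₂.2 ⟨a, ha, (K a).down_closed hs hts ht⟩⟩
      · -- indep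
        intro s hs
        simp only [Set.mem_iUnion] at hs
        obtain ⟨a, ha, hs⟩ := hs
        exact (K a).indep hs
      · -- inter_subset_convexHull
        intro s t hs ht
        simp only [Set.mem_iUnion] at hs ht
        obtain ⟨a, ha, hs⟩ := hs
        obtain ⟨a', ha', ht⟩ := ht
        by_cases hne : a = a'
        · subst hne
          exact (K a).inter_subset_convexHull hs ht
        · rw [← Finset.coe_inter]
          exact hcross a ha a' ha' hne s hs t ht
      · -- vertices
        ext x
        rw [Geometry.SimplicialComplex.mem_vertices]
        simp only [Set.mem_iUnion]
        constructor
        · rintro ⟨a, ha, hx⟩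
          have hxv : x ∈ (K a).vertices := hx
          rw [hKv a ha] at hxv
          exact_mod_cast (hSaS a) (by exact_mod_cast hxv)
        · intro hx
          have hxS : x ∈ S := by exact_mod_cast hx
          have hxT : x ∈ convexHull ℝ (T : Set (Pt d)) := by
            rw [← hhull]
            exact subset_convexHull ℝ _ hx
          obtain ⟨a, ha, hmem⟩ := hcover x hxT
          refine ⟨a, ha, ?_⟩
          show x ∈ (K a).vertices
          rw [hKv a ha]
          exact_mod_cast (hSa_mem a x).2 ⟨hxS, hmem⟩
      · -- space
        ext z
        rw [Geometry.SimplicialComplex.mem_space_iff]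
        constructor
        · rintro ⟨s, hs, hzs⟩
          simp only [Set.mem_iUnion] at hs
          obtain ⟨a, ha, hs⟩ := hs
          have := hface_sub a ha s hs hzs
          rw [hhull]
          exact hsubhull a this
        · intro hz
          rw [hhull] at hz
          obtain ⟨a, ha, hmem⟩ := hcover z hz
          rw [← hSahull a ha, ← hKs a ha, Geometry.SimplicialComplex.mem_space_iff] at hmem
          obtain ⟨s, hs, hzs⟩ := hmem
          exact ⟨s, by simp only [Set.mem_iUnion]; exact ⟨a, ha, hs⟩, hzs⟩
      · -- the invariant
        intro U hU hUne
        obtain ⟨a, haT, haU⟩ := Finset.exists_of_ssubset hU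
        have hUsub : U ⊂ insert q (T \ {a}) := by
          refine lt_of_le_of_lt ?_ (Finset.ssubset_insert (hqTR {a}))
          intro x hx
          exact Finset.mem_sdiff.2 ⟨hU.subset hx,
            fun hc => haU ((Finset.mem_singleton.1 hc) ▸ hx)⟩
        simp only [Set.mem_iUnion]
        exact ⟨a, haT, hKf a haT U hUsub hUne⟩
      · -- the count
        have hiqT : insert q T ⊆ S := by
          intro x hx
          rcases Finset.mem_insert.1 hx with rfl | hx
          exacts [hqS, hTS hx]
        set E : Finset (Pt d) := S \ insert q T with hE_def
        have hEcard : E.card + (d + 2) = S.card := by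
          have h1 : (insert q T).card = d + 2 := by
            rw [Finset.card_insert_of_notMem hqT, hTcard]
          have h2 := Finset.card_le_card hiqT
          rw [hE_def, Finset.card_sdiff_of_subset hiqT, h1]
          omega
        have hE_mem : ∀ r, r ∈ E ↔ r ∈ S ∧ r ≠ q ∧ r ∉ T := by
          intro r
          rw [hE_def, Finset.mem_sdiff, Finset.mem_insert]
          tauto
        set Ea : Pt d → Finset (Pt d) := fun a =>
          E.filter (fun r => r ∈ convexHull ℝ (↑(insert q (T \ {a})) : Set (Pt d)))
          with hEa_def
        have hEa_mem : ∀ a r, r ∈ Ea a ↔ r ∈ E ∧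
            r ∈ convexHull ℝ (↑(insert q (T \ {a})) : Set (Pt d)) := by
          intro a r
          simp [hEa_def]
        have hSaEa : ∀ a ∈ T, Sa a = insert q (T \ {a}) ∪ Ea a := by
          intro a ha
          ext r
          rw [Finset.mem_union, hSa_mem, hEa_mem, hE_mem]
          constructor
          · rintro ⟨hrS, hrh⟩
            by_cases hrσ : r ∈ insert q (T \ {a})
            · exact Or.inl hrσ
            · refine Or.inr ⟨⟨hrS, ?_, ?_⟩, hrh⟩
              · rintro rfl
                exact hrσ (Finset.mem_insert_self _ _)
              · intro hrT
                by_cases hra : r = a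
                · subst hra
                  exact hvnotin r hrT hrh
                · exact hrσ (Finset.mem_insert_of_mem
                    (Finset.mem_sdiff.2 ⟨hrT, fun hc => hra (Finset.mem_singleton.1 hc)⟩))
          · rintro (hrσ | ⟨⟨hrS, hrq, hrT⟩, hrh⟩)
            · exact ⟨hsubS a ha hrσ, subset_convexHull ℝ _ (Finset.mem_coe.2 hrσ)⟩
            · exact ⟨hrS, hrh⟩
        have hSaEacard : ∀ a ∈ T, (Sa a).card = (d+1) + (Ea a).card := by
          intro a ha
          have hdisj : Disjoint (insert q (T \ {a})) (Ea a) := by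
            refine Finset.disjoint_left.2 ?_
            intro r hrσ hrE
            have h2 := (hE_mem r).1 ((hEa_mem a r).1 hrE).1
            rcases Finset.mem_insert.1 hrσ with rfl | hrσ'
            · exact h2.2.1 rfl
            · exact h2.2.2 (Finset.mem_sdiff.1 hrσ').1
          rw [hSaEa a ha, Finset.card_union_of_disjoint hdisj, hsubcard a ha]
        have hpairT : ∀ a ∈ T, ∀ a' ∈ T, ({a, a'} : Finset (Pt d)) ⊆ T := by
          intro a ha a' ha' x hx
          rcases Finset.mem_insert.1 hx with rfl | hx
          exacts [ha, (Finset.mem_singleton.1 hx) ▸ ha']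
        have hτcard2 : ∀ a ∈ T, ∀ a' ∈ T, a ≠ a' →
            (insert q (T \ ({a, a'} : Finset (Pt d)))).card = d := by
          intro a ha a' ha' hne
          have hpc : ({a, a'} : Finset (Pt d)).card = 2 := by
            rw [Finset.card_insert_of_notMem (by simp [hne]), Finset.card_singleton]
          rw [Finset.card_insert_of_notMem (hqTR _), Finset.card_sdiff_of_subset (hpairT a ha a' ha'),
            hpc, hTcard]
          omega
        have hτspan : ∀ a ∈ T, ∀ a' ∈ T, a ≠ a' → ∀ t : Finset (Pt d), t ⊆ S →
            t.card = d + 1 →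
            ¬ ((↑t : Set (Pt d)) ⊆
              (affineSpan ℝ (↑(insert q (T \ ({a, a'} : Finset (Pt d)))) : Set (Pt d)) : Set (Pt d))) := by
          intro a ha a' ha' hne t htS htc hsub
          refine not_indep_subset_span t (insert q (T \ ({a, a'} : Finset (Pt d))))
            ⟨q, Finset.mem_insert_self _ _⟩ (hgp t htS (le_of_eq htc)) ?_ hsub
          rw [hτcard2 a ha a' ha' hne, htc]
          omega
        have hEadisj : ∀ a ∈ T, ∀ a' ∈ T, a ≠ a' → Disjoint (Ea a) (Ea a') := by
          intro a ha a' ha' hne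
          refine Finset.disjoint_left.2 ?_
          intro r hr hr'
          have h1 := (hEa_mem a r).1 hr
          have h2 := (hEa_mem a' r).1 hr'
          have h3 := (hE_mem r).1 h1.1
          have hrτ := hinter a ha a' ha' hne r h1.2 h2.2
          have hrτ' : r ∉ insert q (T \ ({a, a'} : Finset (Pt d))) := by
            intro hc
            rcases Finset.mem_insert.1 hc with rfl | hc
            · exact h3.2.1 rfl
            · exact h3.2.2 (Finset.mem_sdiff.1 hc).1
          refine hτspan a ha a' ha' hne (insert r (insert q (T \ ({a, a'} : Finset (Pt d)))))
            ?_ ?_ ?_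
          · intro x hx
            rcases Finset.mem_insert.1 hx with rfl | hx
            · exact h3.1
            · rcases Finset.mem_insert.1 hx with rfl | hx
              · exact hqS
              · exact hTS (Finset.mem_sdiff.1 hx).1
          · rw [Finset.card_insert_of_notMem hrτ', hτcard2 a ha a' ha' hne]
          · rw [Finset.coe_insert, Set.insert_subset_iff]
            exact ⟨convexHull_subset_affineSpan _ hrτ, subset_affineSpan ℝ _⟩
        have hEbiUnion : E = T.biUnion Ea := by
          ext r
          rw [Finset.mem_biUnion]
          constructor
          · intro hr
            have h3 := (hE_mem r).1 hr
            have hrh : r ∈ convexHull ℝ (T : Set (Pt d)) := by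
              rw [← hhull]
              exact subset_convexHull ℝ _ (Finset.mem_coe.2 h3.1)
            obtain ⟨a, ha, hmem⟩ := hcover r hrh
            exact ⟨a, ha, (hEa_mem a r).2 ⟨hr, hmem⟩⟩
          · rintro ⟨a, ha, hr⟩
            exact ((hEa_mem a r).1 hr).1
        have hEsum : ∑ a ∈ T, (Ea a).card = E.card := by
          rw [hEbiUnion, Finset.card_biUnion (fun a ha a' ha' hne => hEadisj a ha a' ha' hne)]
        have hEap : Ea p = ∅ := by
          rw [Finset.eq_empty_iff_forall_notMem]
          intro r hr
          have h1 := (hEa_mem p r).1 hr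
          have h3 := (hE_mem r).1 h1.1
          obtain ⟨lam, hl0, hl1, heqp, hlep, hrT⟩ := hcoords p hpT r h1.2
          have hcp : 0 < cf p q := hpos q hqS hqT p hpT
          have hminr : cf p q ≤ cf p r := hqmin r (Finset.mem_sdiff.2 ⟨h3.1, h3.2.2⟩)
          have hlam1 : lam = 1 := by
            rw [heqp] at hminr
            have hge1 : 1 ≤ lam := by
              by_contra hcon
              push_neg at hcon
              nlinarith
            linarith
          have hall : ∀ u ∈ T, cf u r = cf u q := by
            have hge : ∀ u ∈ T, cf u q ≤ cf u r := by
              intro u hu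
              have := hlep u hu
              rwa [hlam1, one_mul] at this
            have hsum1 : ∑ u ∈ T, cf u r = 1 := (hrepr r hrT).2.1
            intro u hu
            by_contra hne'
            have hlt : cf u q < cf u r := lt_of_le_of_ne (hge u hu) (fun h => hne' h.symm)
            have hstrict : ∑ u ∈ T, cf u q < ∑ u ∈ T, cf u r :=
              Finset.sum_lt_sum (fun i hi => hge i hi) ⟨u, hu, hlt⟩
            rw [hcq1, hsum1] at hstrict
            exact lt_irrefl 1 hstrict
          have hrq : r = q := by
            rw [← (hrepr r hrT).2.2, ← hcombq]
            exact Finset.sum_congr rfl (fun u hu => by rw [hall u hu])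
          exact h3.2.1 hrq
        -- the simplices at p in each sub-triangulation
        set Fa : Pt d → Finset (Finset (Pt d)) := fun a =>
          ((Sa a).powerset.filter (fun t => t ∈ (K a).faces ∧ t.card = d + 1 ∧ p ∈ t))
          with hFa_def
        have hFa_mem : ∀ a t, t ∈ Fa a ↔ t ⊆ Sa a ∧
            (t ∈ (K a).faces ∧ t.card = d + 1 ∧ p ∈ t) := by
          intro a t
          simp only [hFa_def, Finset.mem_filter, Finset.mem_powerset]
        have hFa_card : ∀ a ∈ T, a ≠ p →
            ((d:ℤ)-1) * ((Sa a).card : ℤ) - (d:ℤ)^2 + 2 ≤ ((Fa a).card : ℤ) := by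
          intro a ha hap
          have h1 := hKc a ha
          rw [if_neg hap] at h1
          have h2 : incCount (K a) (d+1) p = (Fa a).card := by
            rw [incCount]
            have hset : {σ : Finset (Pt d) | σ ∈ (K a).faces ∧ σ.card = d+1 ∧ p ∈ σ}
                = ↑(Fa a) := by
              ext t
              rw [Set.mem_setOf_eq, Finset.mem_coe, hFa_mem]
              constructor
              · rintro ⟨hf, hc, hp'⟩
                exact ⟨hface_subS a ha t hf, hf, hc, hp'⟩
              · rintro ⟨-, hf, hc, hp'⟩
                exact ⟨hf, hc, hp'⟩
            rw [hset, Set.ncard_coe_finset]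
          rwa [h2] at h1
        have hFadisj : ∀ a ∈ T, ∀ a' ∈ T, a ≠ a' → Disjoint (Fa a) (Fa a') := by
          intro a ha a' ha' hne
          refine Finset.disjoint_left.2 ?_
          intro t ht ht'
          have h1 := (hFa_mem a t).1 ht
          have h2 := (hFa_mem a' t).1 ht'
          refine hτspan a ha a' ha' hne t ((h1.1).trans (hSaS a)) h1.2.2.1 ?_
          intro x hx
          have hx1 : x ∈ convexHull ℝ (↑t : Set (Pt d)) := subset_convexHull ℝ _ hx
          exact convexHull_subset_affineSpan _
            (hinter a ha a' ha' hne x (hface_sub a ha t h1.2.1 hx1)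
              (hface_sub a' ha' t h2.2.1 hx1))
        -- assembling the count
        show ((d:ℤ)-1) * (S.card : ℤ) - (d:ℤ)^2 + 2 ≤
          (({σ : Finset (Pt d) | σ ∈ (⋃ a ∈ T, (K a).faces) ∧ σ.card = d+1 ∧ p ∈ σ}.ncard : ℕ) : ℤ)
        have hineq1 : ((T.erase p).biUnion Fa).card ≤
            {σ : Finset (Pt d) | σ ∈ (⋃ a ∈ T, (K a).faces) ∧ σ.card = d+1 ∧ p ∈ σ}.ncard := by
          rw [← Set.ncard_coe_finset]
          refine Set.ncard_le_ncard ?_ ?_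
          · intro t ht
            rw [Finset.mem_coe, Finset.mem_biUnion] at ht
            obtain ⟨a, ha, ht⟩ := ht
            have haT : a ∈ T := Finset.mem_of_mem_erase ha
            have h1 := (hFa_mem a t).1 ht
            refine ⟨?_, h1.2.2⟩
            simp only [Set.mem_iUnion]
            exact ⟨a, haT, h1.2.1⟩
          · refine Set.Finite.subset (S.powerset).finite_toSet ?_
            intro t ht
            obtain ⟨hf, -, -⟩ := ht
            simp only [Set.mem_iUnion] at hf
            obtain ⟨a, ha, hf⟩ := hf
            rw [Finset.mem_coe, Finset.mem_powerset]
            exact (hface_subS a ha t hf).trans (hSaS a)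
        have hineq2 : ((T.erase p).biUnion Fa).card = ∑ a ∈ T.erase p, (Fa a).card :=
          Finset.card_biUnion (fun a ha a' ha' hne =>
            hFadisj a (Finset.mem_of_mem_erase ha) a' (Finset.mem_of_mem_erase ha') hne)
        have hcarderase : (T.erase p).card = d := by
          rw [Finset.card_erase_of_mem hpT, hTcard]
          omega
        have hEsum' : ∑ a ∈ T.erase p, (Ea a).card = E.card := by
          have e3 := Finset.sum_erase_add T (fun a => (Ea a).card) hpT
          simp only [hEap, Finset.card_empty, add_zero] at e3
          rw [e3]
          exact hEsum
        have hsum_bound : ((d:ℤ)-1) * (S.card : ℤ) - (d:ℤ)^2 + 2 ≤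
            ∑ a ∈ T.erase p, ((Fa a).card : ℤ) := by
          have h1 : ∀ a ∈ T.erase p,
              ((d:ℤ)-1) * ((Sa a).card : ℤ) - (d:ℤ)^2 + 2 ≤ ((Fa a).card : ℤ) :=
            fun a ha => hFa_card a (Finset.mem_of_mem_erase ha) (Finset.ne_of_mem_erase ha)
          have h2 := Finset.sum_le_sum h1
          refine le_trans ?_ h2
          have h3 : ∑ a ∈ T.erase p, (((d:ℤ)-1) * ((Sa a).card:ℤ) - (d:ℤ)^2 + 2)
              = ((d:ℤ)-1) * (∑ a ∈ T.erase p, ((Sa a).card:ℤ))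
                + (d:ℤ) * (2 - (d:ℤ)^2) := by
            rw [Finset.sum_add_distrib, Finset.sum_sub_distrib, ← Finset.mul_sum,
              Finset.sum_const, Finset.sum_const, hcarderase]
            push_cast
            ring
          have h4 : ∑ a ∈ T.erase p, ((Sa a).card : ℤ)
              = (d:ℤ)*((d:ℤ)+1) + (E.card : ℤ) := by
            have e1 : ∀ a ∈ T.erase p, ((Sa a).card : ℤ) = ((d:ℤ)+1) + ((Ea a).card : ℤ) := by
              intro a ha
              rw [hSaEacard a (Finset.mem_of_mem_erase ha)]
              push_cast
              ring
            rw [Finset.sum_congr rfl e1, Finset.sum_add_distrib, Finset.sum_const, hcarderase]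
            have e2 : ∑ a ∈ T.erase p, ((Ea a).card : ℤ) = (E.card : ℤ) := by
              rw [← Nat.cast_sum, hEsum']
            rw [e2]
            push_cast
            ring
          rw [h3, h4]
          have h5 : (E.card : ℤ) = (S.card : ℤ) - ((d:ℤ) + 2) := by
            have := hEcard
            push_cast [← this]
            ring
          rw [h5]
          ring_nf
          nlinarith [sq_nonneg ((d:ℤ))]
        calc ((d:ℤ)-1) * (S.card : ℤ) - (d:ℤ)^2 + 2
            ≤ ∑ a ∈ T.erase p, ((Fa a).card : ℤ) := hsum_bound
          _ = (((T.erase p).biUnion Fa).card : ℤ) := by rw [hineq2]; push_cast; rfl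
          _ ≤ _ := by exact_mod_cast hineq1




end


/-- Let `S` be a set of `n ≥ d+1` points in general position in `ℝ^d` (`d ≥ 1`) whose convex
hull is a `d`-simplex. For every convex hull point `p` of `S` there is a triangulation of `S`
such that at least `(d−1)n − d² + 2` of its `d`-simplices have `p` as a vertex. -/
theorem stmt_3 (d n : ℕ) (hd : 1 ≤ d) (S : Finset (Pt d)) (hcard : S.card = n)
    (hn : d + 1 ≤ n) (hgp : GenPos S)
    (hsimplex : ∃ T ⊆ S, T.card = d + 1 ∧
      convexHull ℝ (S : Set (Pt d)) = convexHull ℝ (T : Set (Pt d)))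
    (p : Pt d) (hp : p ∈ hullPts S) :
    ∃ K : Geometry.SimplicialComplex ℝ (Pt d), IsTriangulation S K ∧
      ((d : ℤ) - 1) * n - (d : ℤ) ^ 2 + 2 ≤ (incCount K (d + 1) p : ℤ) := by
  subst hcard
  obtain ⟨T, hTS, hTcard, hhull⟩ := hsimplex
  obtain ⟨hpS, hpfr⟩ := hp
  have hindT : AffineIndependent ℝ (Subtype.val : ↥(T : Set (Pt d)) → Pt d) :=
    hgp T hTS (le_of_eq hTcard)
  have htot : affineSpan ℝ (Set.range (Subtype.val : ↥(T : Set (Pt d)) → Pt d)) = ⊤ := by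
    rw [hindT.affineSpan_eq_top_iff_card_eq_finrank_add_one]
    simp [hTcard]
  set b : AffineBasis ↥(T : Set (Pt d)) ℝ (Pt d) := ⟨Subtype.val, hindT, htot⟩ with hb_def
  have hb : ∀ i, b i = ↑i := fun i => rfl
  have hpT : p ∈ T := by
    by_contra hpT
    have hphull : p ∈ convexHull ℝ (T : Set (Pt d)) := by
      rw [← hhull]
      exact subset_convexHull ℝ _ (Finset.mem_coe.2 hpS)
    have hppos : ∀ i, 0 < b.coord i p :=
      fun i => coord_pos hTS hTcard hd hgp b hb hpS hpT hphull i
    have hrange : Set.range ⇑b = (T : Set (Pt d)) := Subtype.range_coe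
    have hint : p ∈ interior (convexHull ℝ (T : Set (Pt d))) := by
      rw [← hrange, AffineBasis.interior_convexHull]
      exact hppos
    rw [← hhull] at hint
    exact hpfr.2 hint
  obtain ⟨K, hKv, hKs, -, hKc⟩ :=
    key d hd S.card S T le_rfl hTS hTcard hhull hgp p hpT
  exact ⟨K, ⟨hKv, by rw [hKs, hhull]⟩, hKc⟩
end

section
/- Let d > 3 be an integer, let S be a set of n > d points in general position in ℝ^d, and let X ⊂ S be a subset of d−2 points. Let Π be the (d−3)-dimensional affine subspace spanned by X, let Π' be a 3-dimensional affine subspace orthogonal to Π, let S' be the image of S under orthogonal projection onto Π', and let p_X be the (single) point to which all points of X project. Then p_X is an extremal point of S' (i.e., p_X lies on the boundary of the convex hull of S' and is a vertex of it) if and only if the convex hull of X is a (d−3)-dimensional face of the convex hull of S. -/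
open scoped RealInnerProductSpace

open Finset in
lemma aux_hull_step {V : Type*} [AddCommGroup V] [Module ℝ V]
    (X : Finset V) (hne : X.Nonempty) {p : V} (hp : p ∈ affineSpan ℝ (X : Set V)) :
    ∃ y ∈ convexHull ℝ (X : Set V), ∃ ε : ℝ, 0 < ε ∧ ε < 1 ∧
      (1 - ε) • y + ε • p ∈ convexHull ℝ (X : Set V) := by
  classical
  have hrange : Set.range (Subtype.val : {x : V // x ∈ X} → V) = (X : Set V) := by
    ext x; simp
  rw [← hrange] at hp
  obtain ⟨s, w, hw1, hpw⟩ := eq_affineCombination_of_mem_affineSpan hp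
  have hsub : s ⊆ X.attach := fun i _ => X.mem_attach i
  set u : {x : V // x ∈ X} → ℝ := Set.indicator (↑s) w with hu
  have hu1 : ∑ i ∈ X.attach, u i = 1 := by
    rw [hu, Finset.sum_indicator_subset w hsub, hw1]
  have hpu : p = ∑ i ∈ X.attach, u i • (i : V) := by
    rw [hpw, Finset.affineCombination_indicator_subset w _ hsub,
      Finset.affineCombination_eq_linear_combination _ _ _ hu1]
  set m : ℝ := (X.card : ℝ) with hm
  have hm0 : 0 < m := by
    simp only [hm]; exact_mod_cast Finset.card_pos.mpr hne
  have hminv : 0 < m⁻¹ := inv_pos.mpr hm0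
  set M : ℝ := ∑ i ∈ X.attach, |u i| with hM
  have hM0 : 0 ≤ M := Finset.sum_nonneg fun i _ => abs_nonneg _
  set ε : ℝ := 1 / (2 * (1 + m * M)) with hε
  have hD : 0 < 1 + m * M := by positivity
  have hε0 : 0 < ε := by positivity
  have hεe : ε * (2 * (1 + m * M)) = 1 := by
    rw [hε]; field_simp
  have hεhalf : ε ≤ 1 / 2 := by nlinarith [mul_nonneg (mul_nonneg hε0.le hm0.le) hM0]
  have hε1 : ε < 1 := lt_of_le_of_lt hεhalf (by norm_num)
  have hεM : ε * M ≤ m⁻¹ / 2 := by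
    have hmm : m * m⁻¹ = 1 := mul_inv_cancel₀ (ne_of_gt hm0)
    nlinarith [mul_nonneg hε0.le hM0, mul_pos hm0 hminv]
  set k : {x : V // x ∈ X} → ℝ := fun i => (1 - ε) * m⁻¹ + ε * u i with hk
  have hknn : ∀ i ∈ X.attach, 0 ≤ k i := by
    intro i _
    have habs : |u i| ≤ M := Finset.single_le_sum (f := fun i => |u i|)
      (fun j _ => abs_nonneg _) (X.mem_attach i)
    have h1 : -(ε * M) ≤ ε * u i := by nlinarith [neg_abs_le (u i)]
    have h2 : m⁻¹ / 2 ≤ (1 - ε) * m⁻¹ := by nlinarith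
    simp only [hk]
    linarith
  have hcard : (X.attach.card : ℝ) = m := by rw [Finset.card_attach, hm]
  have hksum : ∑ i ∈ X.attach, k i = 1 := by
    simp only [hk]
    rw [Finset.sum_add_distrib, ← Finset.mul_sum, ← Finset.mul_sum, hu1]
    have : ∑ _i ∈ X.attach, m⁻¹ = 1 := by
      rw [Finset.sum_const, nsmul_eq_mul, hcard]
      exact mul_inv_cancel₀ (ne_of_gt hm0)
    rw [this]; ring
  have hsum1 : ∑ _i ∈ X.attach, m⁻¹ = 1 := by
    rw [Finset.sum_const, nsmul_eq_mul, hcard]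
    exact mul_inv_cancel₀ (ne_of_gt hm0)
  set y : V := ∑ i ∈ X.attach, m⁻¹ • (i : V) with hy
  have hymem : y ∈ convexHull ℝ (X : Set V) := by
    have h := Finset.centerMass_mem_convexHull X.attach
      (w := fun _ => m⁻¹) (z := fun i => (i : V)) (fun i _ => hminv.le)
      (by rw [hsum1]; norm_num) (fun i _ => Finset.mem_coe.mpr i.2)
    rwa [Finset.centerMass_eq_of_sum_1 _ _ hsum1] at h
  refine ⟨y, hymem, ε, hε0, hε1, ?_⟩
  have hzmem : ∑ i ∈ X.attach, k i • (i : V) ∈ convexHull ℝ (X : Set V) := by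
    have h := Finset.centerMass_mem_convexHull X.attach (w := k)
      (z := fun i => (i : V)) hknn (by rw [hksum]; norm_num)
      (fun i _ => Finset.mem_coe.mpr i.2)
    rwa [Finset.centerMass_eq_of_sum_1 _ _ hksum] at h
  have heq : (1 - ε) • y + ε • p = ∑ i ∈ X.attach, k i • (i : V) := by
    rw [hy, hpu, Finset.smul_sum, Finset.smul_sum, ← Finset.sum_add_distrib]
    refine Finset.sum_congr rfl fun i _ => ?_
    rw [smul_smul, smul_smul, ← add_smul]
  rw [heq]; exact hzmem

set_option maxHeartbeats 1000000 in
/-- Let `S` be a set of `n > d` points in general position in `ℝ^d` (`d > 3`), `X ⊂ S` with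
`|X| = d−2`. Let `Π'` be a 3-dimensional affine subspace orthogonal to the affine span of `X`,
let `f` be the orthogonal projection onto `Π'`, let `S' = f(S)` and `p_X` the common image of
`X`. Then `p_X` is an extremal point of `S'` if and only if the convex hull of `X` is a
(`d−3`)-dimensional face (an extreme subset) of the convex hull of `S`. -/
theorem stmt_9 (d n : ℕ) (hd : 3 < d) (S : Finset (Pt d)) (hcard : S.card = n)
    (hn : d < n) (hgp : GenPos S)
    (X : Finset (Pt d)) (hX : X ⊆ S) (hXcard : X.card = d - 2)
    (Pi' : AffineSubspace ℝ (Pt d)) (hne : (Pi' : Set (Pt d)).Nonempty)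
    (hdim : Module.finrank ℝ Pi'.direction = 3)
    (horth : ∀ v ∈ Pi'.direction,
      ∀ w ∈ (affineSpan ℝ (X : Set (Pt d))).direction, ⟪v, w⟫ = 0)
    (f : Pt d → Pt d)
    (hproj : ∀ q : Pt d, f q ∈ Pi' ∧ ∀ v ∈ Pi'.direction, ⟪q - f q, v⟫ = 0)
    (pX : Pt d) (hpX : ∀ x ∈ X, f x = pX) :
    pX ∉ convexHull ℝ ((f '' (S : Set (Pt d))) \ {pX}) ↔
      IsExtreme ℝ (convexHull ℝ (S : Set (Pt d))) (convexHull ℝ (X : Set (Pt d))) := by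
  classical
  have hXai : AffineIndependent ℝ (Subtype.val : ↥(X : Set (Pt d)) → Pt d) :=
    hgp X hX (by omega)
  have hXne : X.Nonempty := Finset.card_pos.mp (by omega)
  obtain ⟨x0, hx0⟩ := id hXne
  have hx0S : x0 ∈ S := hX hx0
  have hpX0 : f x0 = pX := hpX x0 hx0
  -- the direction of the affine span of X equals the orthogonal complement of Pi'.direction
  have hrange : Set.range (Subtype.val : ↥(X : Set (Pt d)) → Pt d) = (X : Set (Pt d)) :=
    Subtype.range_coe
  have hdimW : Module.finrank ℝ (affineSpan ℝ (X : Set (Pt d))).direction = d - 3 := by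
    rw [direction_affineSpan, ← hrange]
    refine hXai.finrank_vectorSpan ?_
    rw [← Set.toFinset_card, Finset.toFinset_coe]
    omega
  have hdimVp : Module.finrank ℝ Pi'.directionᗮ = d - 3 := by
    have h1 := Submodule.finrank_add_finrank_orthogonal (K := Pi'.direction)
    rw [hdim, finrank_euclideanSpace_fin] at h1
    omega
  have hWle : (affineSpan ℝ (X : Set (Pt d))).direction ≤ Pi'.directionᗮ := by
    intro w hw
    rw [Submodule.mem_orthogonal]
    exact fun v hv => horth v hv w hw
  have hWeq : (affineSpan ℝ (X : Set (Pt d))).direction = Pi'.directionᗮ :=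
    Submodule.eq_of_le_of_finrank_le hWle (by rw [hdimW, hdimVp])
  -- f agrees with an affine map
  have hPine : Nonempty ↥Pi' := hne.to_subtype
  have hqf : ∀ q : Pt d, q - f q ∈ Pi'.directionᗮ := by
    intro q
    rw [Submodule.mem_orthogonal']
    exact (hproj q).2
  obtain ⟨F, hfF⟩ : ∃ F : Pt d →ᵃ[ℝ] Pt d, ∀ q, f q = F q := by
    refine ⟨(Pi'.subtype).comp (EuclideanGeometry.orthogonalProjection Pi'), fun q => ?_⟩
    set Fq : Pt d := (Pi'.subtype).comp (EuclideanGeometry.orthogonalProjection Pi') q with hFq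
    have h1 : Fq ∈ Pi' := ((EuclideanGeometry.orthogonalProjection Pi') q).2
    have h2 : q - Fq ∈ Pi'.directionᗮ := by
      have := EuclideanGeometry.vsub_orthogonalProjection_mem_direction_orthogonal Pi' q
      simpa [hFq, vsub_eq_sub] using this
    have h4 : f q - Fq ∈ Pi'.directionᗮ := by
      have he : f q - Fq = (q - Fq) - (q - f q) := by abel
      rw [he]; exact sub_mem h2 (hqf q)
    have h5 : f q - Fq ∈ Pi'.direction := by
      have := AffineSubspace.vsub_mem_direction (hproj q).1 h1
      simpa [vsub_eq_sub] using this
    have h6 : f q - Fq = 0 :=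
      (Submodule.disjoint_def.mp (Submodule.orthogonal_disjoint Pi'.direction)) _ h5 h4
    exact sub_eq_zero.mp h6
  have hfun : f = ⇑F := funext hfF
  -- fiber characterization
  have hx0span : x0 ∈ affineSpan ℝ (X : Set (Pt d)) :=
    mem_affineSpan ℝ (Finset.mem_coe.mpr hx0)
  have hfiber : ∀ q : Pt d, f q = pX ↔ q ∈ affineSpan ℝ (X : Set (Pt d)) := by
    intro q
    constructor
    · intro hq
      have hmem : q - x0 ∈ Pi'.directionᗮ := by
        have he : q - x0 = (q - f q) - (x0 - f x0) := by rw [hq, hpX0]; abel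
        rw [he]; exact sub_mem (hqf q) (hqf x0)
      rw [← hWeq] at hmem
      exact (AffineSubspace.vsub_right_mem_direction_iff_mem hx0span q).mp
        (by simpa [vsub_eq_sub] using hmem)
    · intro hq
      have hqv : q - x0 ∈ Pi'.directionᗮ := by
        rw [← hWeq]
        simpa [vsub_eq_sub] using AffineSubspace.vsub_mem_direction hq hx0span
      have h7 : f q - f x0 ∈ Pi'.directionᗮ := by
        have he : f q - f x0 = ((q - x0) - (q - f q)) + (x0 - f x0) := by abel
        rw [he]; exact add_mem (sub_mem hqv (hqf q)) (hqf x0)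
      have h8 : f q - f x0 ∈ Pi'.direction := by
        have := AffineSubspace.vsub_mem_direction (hproj q).1 (hproj x0).1
        simpa [vsub_eq_sub] using this
      have h9 : f q - f x0 = 0 :=
        (Submodule.disjoint_def.mp (Submodule.orthogonal_disjoint Pi'.direction)) _ h8 h7
      rw [← hpX0]
      exact sub_eq_zero.mp h9
  -- points of S outside X do not map to pX
  have hSX : ∀ t ∈ S, t ∉ X → f t ≠ pX := by
    intro t htS htX hft
    have htspan : t ∈ affineSpan ℝ (X : Set (Pt d)) := (hfiber t).mp hft
    have hins : insert t X ⊆ S := Finset.insert_subset htS hX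
    have hTai : AffineIndependent ℝ
        (Subtype.val : ↥((insert t X : Finset (Pt d)) : Set (Pt d)) → Pt d) :=
      hgp _ hins (by rw [Finset.card_insert_of_notMem htX]; omega)
    have htmem : t ∈ ((insert t X : Finset (Pt d)) : Set (Pt d)) := by simp
    have himgeq : (Subtype.val : ↥((insert t X : Finset (Pt d)) : Set (Pt d)) → Pt d) ''
        (Set.univ \ {⟨t, htmem⟩}) = (X : Set (Pt d)) := by
      ext y
      simp only [Set.mem_image, Set.mem_diff, Set.mem_univ, true_and,
        Set.mem_singleton_iff, Finset.mem_coe]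
      constructor
      · rintro ⟨⟨z, hz⟩, hzne, rfl⟩
        simp only [Subtype.ext_iff] at hzne
        simp only [Finset.mem_coe, Finset.mem_insert] at hz
        rcases hz with rfl | hz
        · exact absurd rfl hzne
        · exact hz
      · intro hy
        refine ⟨⟨y, by simp [hy]⟩, ?_, rfl⟩
        simp only [ne_eq, Subtype.ext_iff]
        intro hyt
        exact htX (hyt ▸ hy)
    have := hTai.notMem_affineSpan_diff ⟨t, htmem⟩ Set.univ
    rw [himgeq] at this
    exact this htspan
  -- image identity
  have himg : f '' (S : Set (Pt d)) \ {pX} = f '' ((S \ X : Finset (Pt d)) : Set (Pt d)) := by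
    ext y
    simp only [Set.mem_diff, Set.mem_image, Finset.coe_sdiff, Set.mem_singleton_iff,
      Finset.mem_coe, Set.mem_diff]
    constructor
    · rintro ⟨⟨t, htS, rfl⟩, hne'⟩
      exact ⟨t, ⟨htS, fun htX => hne' (hpX t htX)⟩, rfl⟩
    · rintro ⟨t, ⟨htS, htX⟩, rfl⟩
      exact ⟨⟨t, htS, rfl⟩, hSX t htS htX⟩
  have hSXne : (S \ X).Nonempty := by
    rw [← Finset.card_pos, Finset.card_sdiff_of_subset hX]
    omega
  have hA'ne : (f '' (S : Set (Pt d)) \ {pX}).Nonempty := by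
    rw [himg]
    exact (Finset.coe_nonempty.mpr hSXne).image f
  have hpXimg : pX ∈ f '' (S : Set (Pt d)) :=
    ⟨x0, Finset.mem_coe.mpr hx0S, hpX0⟩
  have hXS : (X : Set (Pt d)) ⊆ (S : Set (Pt d)) := Finset.coe_subset.mpr hX
  have hXcne : (X : Set (Pt d)).Nonempty := Finset.coe_nonempty.mpr ⟨x0, hx0⟩
  -- key inclusion
  have hkey : ∀ p : Pt d, p ∈ convexHull ℝ (S : Set (Pt d)) → f p = pX →
      pX ∉ convexHull ℝ (f '' (S : Set (Pt d)) \ {pX}) →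
      p ∈ convexHull ℝ (X : Set (Pt d)) := by
    intro p hpS hfp h
    have hdecomp : (S : Set (Pt d)) =
        (X : Set (Pt d)) ∪ ((S \ X : Finset (Pt d)) : Set (Pt d)) := by
      rw [Finset.coe_sdiff, Set.union_diff_cancel hXS]
    rw [hdecomp, convexHull_union hXcne (Finset.coe_nonempty.mpr hSXne),
      mem_convexJoin] at hpS
    obtain ⟨a, ha, b, hb, u, v, hu, hv, huv, hpe⟩ := hpS
    have hfa : f a = pX := (hfiber a).mpr (convexHull_subset_affineSpan _ ha)
    have hfb : f b ∈ convexHull ℝ (f '' (S : Set (Pt d)) \ {pX}) := by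
      rw [himg]
      have himg2 : f '' convexHull ℝ ((S \ X : Finset (Pt d)) : Set (Pt d)) =
          convexHull ℝ (f '' ((S \ X : Finset (Pt d)) : Set (Pt d))) := by
        rw [hfun]; exact F.image_convexHull _
      exact himg2 ▸ Set.mem_image_of_mem f hb
    have hcombo : f (u • a + v • b) = u • f a + v • f b := by
      rw [hfun]; exact Convex.combo_affine_apply huv
    rw [hpe, hfp, hfa] at hcombo
    by_cases hv0 : v = 0
    · have hu1 : u = 1 := by linarith
      rw [← hpe, hv0, hu1, one_smul, zero_smul, add_zero]
      exact ha
    · exfalso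
      have hfbeq : f b = pX := by
        have hv' : v • f b = v • pX := by
          have h1 : v • f b = pX - u • pX := (sub_eq_of_eq_add' hcombo).symm
          have h2 : pX - u • pX = v • pX := by
            rw [show v = 1 - u by linarith, sub_smul, one_smul]
          rw [h1, h2]
        exact smul_right_injective (Pt d) hv0 hv'
      exact h (hfbeq ▸ hfb)
  constructor
  · -- extremal point → face
    intro h
    refine ⟨convexHull_mono hXS, ?_⟩
    intro x1 hx1 x2 hx2 z hzX hzseg
    obtain ⟨a, b, ha0, hb0, hab, hz⟩ := hzseg
    have hfz : f z = pX := (hfiber z).mpr (convexHull_subset_affineSpan _ hzX)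
    have hSimg : f '' (S : Set (Pt d)) = insert pX (f '' (S : Set (Pt d)) \ {pX}) := by
      rw [Set.insert_diff_singleton]
      exact (Set.insert_eq_self.mpr hpXimg).symm
    have hjoin : convexHull ℝ (f '' (S : Set (Pt d))) =
        convexJoin ℝ {pX} (convexHull ℝ (f '' (S : Set (Pt d)) \ {pX})) := by
      conv_lhs => rw [hSimg]
      rw [convexHull_insert hA'ne]
    have himgS : ∀ x : Pt d, x ∈ convexHull ℝ (S : Set (Pt d)) →
        f x ∈ convexHull ℝ (f '' (S : Set (Pt d))) := by
      intro x hxm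
      rw [hfun, ← F.image_convexHull]
      exact Set.mem_image_of_mem _ hxm
    have hfx1 := himgS x1 hx1
    have hfx2 := himgS x2 hx2
    rw [hjoin, mem_convexJoin] at hfx1 hfx2
    obtain ⟨p1, hp1, y1, hy1, u1, v1, hu1, hv1, huv1, he1⟩ := hfx1
    obtain ⟨p2, hp2, y2, hy2, u2, v2, hu2, hv2, huv2, he2⟩ := hfx2
    rw [Set.mem_singleton_iff] at hp1 hp2
    rw [hp1] at he1
    rw [hp2] at he2
    have hcombo : pX = a • f x1 + b • f x2 := by
      rw [← hfz, ← hz, hfun]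
      exact Convex.combo_affine_apply hab
    rw [← he1, ← he2] at hcombo
    have heq' : pX = (a * u1 + b * u2) • pX + ((a * v1) • y1 + (b * v2) • y2) :=
      hcombo.trans (by module)
    have hsc : a * u1 + b * u2 = 1 - (a * v1 + b * v2) := by
      linear_combination a * huv1 + b * huv2 + hab
    have hcc : (a * v1 + b * v2) • pX = (a * v1) • y1 + (b * v2) • y2 := by
      have h' : pX - (1 - (a * v1 + b * v2)) • pX = (a * v1) • y1 + (b * v2) • y2 := by
        rw [hsc] at heq'
        exact sub_eq_of_eq_add' heq'
      rw [← h', sub_smul, one_smul]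
      abel
    set c : ℝ := a * v1 + b * v2 with hcdef
    have hav : 0 ≤ a * v1 := mul_nonneg ha0.le hv1
    have hbv : 0 ≤ b * v2 := mul_nonneg hb0.le hv2
    by_cases hc0 : c = 0
    · have hav0 : a * v1 = 0 := by
        rw [hcdef] at hc0; linarith
      have hbv0 : b * v2 = 0 := by
        rw [hcdef] at hc0; linarith
      have hv10 : v1 = 0 := by
        rcases mul_eq_zero.mp hav0 with h' | h'
        · exact absurd h' (ne_of_gt ha0)
        · exact h'
      have hv20 : v2 = 0 := by
        rcases mul_eq_zero.mp hbv0 with h' | h'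
        · exact absurd h' (ne_of_gt hb0)
        · exact h'
      have hfx1p : f x1 = pX := by
        rw [← he1, hv10, show u1 = 1 by linarith, one_smul, zero_smul, add_zero]
      have hfx2p : f x2 = pX := by
        rw [← he2, hv20, show u2 = 1 by linarith, one_smul, zero_smul, add_zero]
      exact hkey x1 hx1 hfx1p h
    · exfalso
      have hcpos : 0 < c := lt_of_le_of_ne (by rw [hcdef]; linarith) (Ne.symm hc0)
      have hpXmem : pX ∈ convexHull ℝ (f '' (S : Set (Pt d)) \ {pX}) := by
        have hmem := (convex_convexHull ℝ (f '' (S : Set (Pt d)) \ {pX})) hy1 hy2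
          (div_nonneg hav hcpos.le) (div_nonneg hbv hcpos.le)
          (by rw [← add_div, ← hcdef, div_self hc0])
        have hpx : (a * v1 / c) • y1 + (b * v2 / c) • y2 = pX := by
          have h3 : c⁻¹ • (c • pX) = c⁻¹ • ((a * v1) • y1 + (b * v2) • y2) := by rw [hcc]
          rw [smul_smul, inv_mul_cancel₀ hc0, one_smul] at h3
          rw [h3, smul_add, smul_smul, smul_smul]
          congr 1 <;> rw [div_eq_inv_mul]
        exact hpx ▸ hmem
      exact h hpXmem
  · -- face → extremal point
    intro h hmem
    rw [himg] at hmem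
    have himg3 : convexHull ℝ (f '' ((S \ X : Finset (Pt d)) : Set (Pt d))) =
        f '' convexHull ℝ ((S \ X : Finset (Pt d)) : Set (Pt d)) := by
      rw [hfun]; exact (F.image_convexHull _).symm
    rw [himg3] at hmem
    obtain ⟨p, hpconv, hfp⟩ := hmem
    have hSXsub : ((S \ X : Finset (Pt d)) : Set (Pt d)) ⊆ (S : Set (Pt d)) :=
      Finset.coe_subset.mpr (Finset.sdiff_subset)
    have hpS : p ∈ convexHull ℝ (S : Set (Pt d)) := convexHull_mono hSXsub hpconv
    have hpspan : p ∈ affineSpan ℝ (X : Set (Pt d)) := (hfiber p).mp hfp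
    obtain ⟨y, hy, ε, hε0, hε1, hzmem⟩ := aux_hull_step X ⟨x0, hx0⟩ hpspan
    have hyS : y ∈ convexHull ℝ (S : Set (Pt d)) := convexHull_mono hXS hy
    have hseg : (1 - ε) • y + ε • p ∈ openSegment ℝ y p :=
      ⟨1 - ε, ε, by linarith, hε0, by ring, rfl⟩
    have hpX' : p ∈ convexHull ℝ (X : Set (Pt d)) := h.2 hpS hyS hzmem (by rw [openSegment_symm]; exact hseg)
    -- now derive a contradiction from p ∈ conv X and p ∈ conv (S \ X)
    rw [Finset.convexHull_eq] at hpconv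
    obtain ⟨w, hw0, hw1, hwc⟩ := hpconv
    rw [Finset.centerMass_eq_of_sum_1 _ _ hw1] at hwc
    simp only [id] at hwc
    have hsum_ne : ∑ y ∈ S \ X, w y ≠ 0 := by rw [hw1]; exact one_ne_zero
    obtain ⟨s1, hs1, hws1⟩ := Finset.exists_ne_zero_of_sum_ne_zero hsum_ne
    have hws1p : 0 < w s1 := lt_of_le_of_ne (hw0 s1 hs1) (Ne.symm hws1)
    have hs1S : s1 ∈ S := (Finset.mem_sdiff.mp hs1).1
    have hs1X : s1 ∉ X := (Finset.mem_sdiff.mp hs1).2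
    have hsplit : w s1 • s1 + ∑ y ∈ (S \ X).erase s1, w y • y = p := by
      rw [← hwc]
      exact Finset.add_sum_erase _ (fun y => w y • y) hs1
    have hcsum : w s1 + ∑ y ∈ (S \ X).erase s1, w y = 1 := by
      rw [← hw1]
      exact Finset.add_sum_erase _ w hs1
    have hs1notX : s1 ∉ convexHull ℝ (X : Set (Pt d)) := by
      intro hcon
      exact hSX s1 hs1S hs1X
        ((hfiber s1).mpr (convexHull_subset_affineSpan _ hcon))
    by_cases hc0 : ∑ y ∈ (S \ X).erase s1, w y = 0
    · have hall : ∀ y ∈ (S \ X).erase s1, w y = 0 :=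
        (Finset.sum_eq_zero_iff_of_nonneg
          (fun y hy => hw0 y (Finset.erase_subset _ _ hy))).mp hc0
      have hps1 : p = s1 := by
        rw [← hsplit, Finset.sum_eq_zero (fun y hy => by rw [hall y hy, zero_smul]),
          add_zero, show w s1 = 1 by linarith, one_smul]
      exact hs1notX (hps1 ▸ hpX')
    · have hcpos : 0 < ∑ y ∈ (S \ X).erase s1, w y :=
        lt_of_le_of_ne (Finset.sum_nonneg fun y hy => hw0 y (Finset.erase_subset _ _ hy))
          (Ne.symm hc0)
      set r : Pt d := ((S \ X).erase s1).centerMass w id with hrdef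
      have hrS : r ∈ convexHull ℝ (S : Set (Pt d)) := by
        refine Finset.centerMass_mem_convexHull _
          (fun y hy => hw0 y (Finset.erase_subset _ _ hy)) hcpos
          (fun y hy => ?_)
        exact Finset.mem_coe.mpr (Finset.mem_sdiff.mp (Finset.erase_subset _ _ hy)).1
      have hcr : (∑ y ∈ (S \ X).erase s1, w y) • r = ∑ y ∈ (S \ X).erase s1, w y • y := by
        rw [hrdef, Finset.centerMass, smul_smul, mul_inv_cancel₀ hc0, one_smul]
        rfl
      have hpseg : p ∈ openSegment ℝ s1 r := by
        refine ⟨w s1, ∑ y ∈ (S \ X).erase s1, w y, hws1p, hcpos, hcsum, ?_⟩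
        rw [hcr, hsplit]
      have hs1Sc : s1 ∈ convexHull ℝ (S : Set (Pt d)) :=
        subset_convexHull ℝ _ (Finset.mem_coe.mpr hs1S)
      exact hs1notX (h.2 hs1Sc hrS hpX' hpseg)
end
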